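/- For the gamma characteristic exponent ψ_γ(x) = α log(κ/(κ-ix)) with κ, α > 0 and β > 0, the identity ∫_s^t ψ_γ((1 - e^{-β(t-u)})x/β) du = (t-s)ψ_γ(x/β) + (α/β)(Li₂(v) - Li₂(v e^{-β(t-s)})) holds, where v = -ix/(κβ - ix). -/

import Mathlib

open MeasureTheory Complex

/-- The dilogarithm `Li₂(z) = ∑_{n≥1} zⁿ/n²`. -/
noncomputable def dilog (z : ℂ) : ℂ := ∑' n : ℕ, z ^ (n + 1) / ((n : ℂ) + 1) ^ 2

/-- The characteristic exponent `ψ_γ(x) = α log(κ/(κ - ix))` of a gamma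
distribution with parameters `(κ, α)` (principal branch of the logarithm). -/
noncomputable def gammaExponent (κ α : ℝ) (x : ℝ) : ℂ :=
  α * Complex.log (κ / (κ - x * Complex.I))

/-! With `v = -ix/(κβ - ix)` one has `1 - i(1-w)x/(κβ) = (1 - ix/(κβ))(1 - wv)`; for `|w| ≤ 1`
both factors lie in the right half-plane, where the principal logarithm is additive, so
`ψ_γ((1-w)x/β) = ψ_γ(x/β) - α log(1 - wv)`. With `w = e^{-β(t-u)}`, expanding
`-log(1 - wv) = ∑ (wv)ⁿ/n` and integrating term by term (dominated by `∑ ‖v‖ⁿ`) gives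
`∑ (vⁿ - (ve^{-β(t-s)})ⁿ)/(βn²) = (Li₂(v) - Li₂(ve^{-β(t-s)}))/β`. -/

lemma Complex.re_one_sub_pos {z : ℂ} (hz : ‖z‖ < 1) : 0 < (1 - z).re := by
  rw [sub_re, one_re]
  linarith [re_le_norm z]

lemma Complex.log_mul_of_re_pos {a b : ℂ} (ha : 0 < a.re) (hb : 0 < b.re) :
    log (a * b) = log a + log b := by
  have harg {z : ℂ} (hz : 0 < z.re) := abs_lt.mp (abs_arg_lt_pi_div_two_iff.mpr (.inl hz))
  refine log_mul (fun h => by simp [h] at ha) (fun h => by simp [h] at hb) ⟨?_, ?_⟩ <;>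
    linarith [harg ha, harg hb, Real.pi_pos]

lemma Complex.norm_ofReal_mul_le {w : ℝ} (hw : |w| ≤ 1) (z : ℂ) : ‖(w : ℂ) * z‖ ≤ ‖z‖ := by
  rw [norm_mul, norm_real, Real.norm_eq_abs]
  exact mul_le_of_le_one_left (norm_nonneg z) hw

lemma Complex.norm_neg_mul_I_div_sub_lt_one {a : ℝ} (ha : a ≠ 0) (y : ℝ) :
    ‖-(y * I) / (a - y * I)‖ < 1 := by
  have hsq : (a : ℂ) - y * I = a + (-y : ℝ) * I := by push_cast; ring
  rw [norm_div, norm_neg, norm_mul, norm_I, mul_one, norm_real, hsq, norm_add_mul_I,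
    div_lt_one (by positivity), Real.norm_eq_abs, Real.lt_sqrt (abs_nonneg y), sq_abs]
  nlinarith [pow_pos (abs_pos.mpr ha) 2, sq_abs a]

lemma hasSum_dilog {z : ℂ} (hz : ‖z‖ ≤ 1) :
    HasSum (fun n : ℕ => z ^ (n + 1) / ((n : ℂ) + 1) ^ 2) (dilog z) := by
  refine Summable.hasSum (.of_norm_bounded
    ((summable_nat_add_iff 1).mpr (Real.summable_one_div_nat_pow.mpr one_lt_two)) fun n => ?_)
  rw [norm_div, norm_pow, norm_pow, div_eq_mul_one_div]
  refine mul_le_of_le_one_left (by positivity) (pow_le_one₀ (norm_nonneg z) hz) |>.trans_eq ?_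
  norm_cast

lemma gammaExponent_eq_neg_log {κ : ℝ} (hκ : κ ≠ 0) (α y : ℝ) :
    gammaExponent κ α y = -(α * log (1 - y * I / κ)) := by
  have hre : 0 < (1 - y * I / κ).re := by simp
  have hden : (κ : ℂ) - y * I ≠ 0 := fun h => by simpa [hκ] using congrArg re h
  have hκ' : (κ : ℂ) ≠ 0 := ofReal_ne_zero.mpr hκ
  rw [gammaExponent, ← mul_neg, ← log_inv _ (slitPlane_arg_ne_pi (.inl hre))]
  congr 2
  field_simp

lemma gammaExponent_one_sub_mul {κ β : ℝ} (hκ : κ ≠ 0) (hβ : β ≠ 0) (α x : ℝ) {w : ℝ}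
    (hw : |w| ≤ 1) :
    gammaExponent κ α ((1 - w) * x / β) =
      gammaExponent κ α (x / β) - α * log (1 - w * (-(x * I) / (κ * β - x * I))) := by
  set v : ℂ := -(x * I) / (κ * β - x * I)
  have hv : ‖v‖ < 1 := by
    simpa only [ofReal_mul] using norm_neg_mul_I_div_sub_lt_one (mul_ne_zero hκ hβ) x
  have hfactor :
      1 - ((1 - w) * x / β : ℝ) * I / κ = (1 - (x / β : ℝ) * I / κ) * (1 - w * v) := by
    have hκ' : (κ : ℂ) ≠ 0 := ofReal_ne_zero.mpr hκ
    have hβ' : (β : ℂ) ≠ 0 := ofReal_ne_zero.mpr hβ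
    have hden : (β : ℂ) * κ - x * I ≠ 0 := fun h => by simpa [hκ, hβ] using congrArg re h
    simp only [v]
    push_cast
    field_simp
    ring
  rw [gammaExponent_eq_neg_log hκ, gammaExponent_eq_neg_log hκ, hfactor,
    log_mul_of_re_pos (by simp) (re_one_sub_pos ((norm_ofReal_mul_le hw v).trans_lt hv))]
  ring

lemma abs_exp_neg_mul_sub_le_one {β t u : ℝ} (hβ : 0 ≤ β) (hu : u ≤ t) :
    |Real.exp (-β * (t - u))| ≤ 1 := by
  rw [abs_of_pos (Real.exp_pos _), Real.exp_le_one_iff]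
  nlinarith

lemma integral_exp_neg_mul_sub_mul_pow {β : ℝ} (hβ : β ≠ 0) (s t : ℝ) (z : ℂ) (n : ℕ) :
    ∫ u in s..t, ((Real.exp (-β * (t - u)) : ℂ) * z) ^ (n + 1) =
      (z ^ (n + 1) - (z * Real.exp (-β * (t - s))) ^ (n + 1)) / ((n + 1) * β) := by
  have hderiv (u : ℝ) :
      HasDerivAt (fun u : ℝ => ((Real.exp (-β * (t - u)) : ℂ) * z) ^ (n + 1) / ((n + 1) * β))
        (((Real.exp (-β * (t - u)) : ℂ) * z) ^ (n + 1)) u := by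
    have he : HasDerivAt (fun u => Real.exp (-β * (t - u))) (Real.exp (-β * (t - u)) * β) u := by
      simpa using (((hasDerivAt_id u).const_sub t).const_mul (-β)).exp
    have hβ' : (β : ℂ) ≠ 0 := ofReal_ne_zero.mpr hβ
    have hn : (n : ℂ) + 1 ≠ 0 := Nat.cast_add_one_ne_zero n
    refine (((he.ofReal_comp.mul_const z).fun_pow (n + 1)).div_const ((n + 1) * β)).congr_deriv ?_
    rw [Nat.add_sub_cancel]
    push_cast
    field_simp
    ring
  rw [intervalIntegral.integral_eq_sub_of_hasDerivAt (fun u _ => hderiv u)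
    (Continuous.intervalIntegrable (by fun_prop) _ _)]
  simp only [sub_self, mul_zero, Real.exp_zero, ofReal_one, one_mul, sub_div, mul_comm z]

section

variable {β s t : ℝ} {v : ℂ}

lemma norm_exp_neg_mul_sub_mul_lt_one (hβ : 0 < β) (hst : s ≤ t) (hv : ‖v‖ < 1) {u : ℝ}
    (hu : u ∈ Set.uIcc s t) : ‖(Real.exp (-β * (t - u)) : ℂ) * v‖ < 1 :=
  (norm_ofReal_mul_le (abs_exp_neg_mul_sub_le_one hβ.le (Set.uIcc_of_le hst ▸ hu).2) v).trans_lt hv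

lemma intervalIntegrable_log_one_sub_exp_neg_mul_sub_mul (hβ : 0 < β) (hst : s ≤ t)
    (hv : ‖v‖ < 1) :
    IntervalIntegrable (fun u => log (1 - Real.exp (-β * (t - u)) * v)) volume s t :=
  ContinuousOn.intervalIntegrable fun u hu =>
    (ContinuousAt.clog (f := fun u : ℝ => 1 - (Real.exp (-β * (t - u)) : ℂ) * v) (by fun_prop)
      (.inl (re_one_sub_pos (norm_exp_neg_mul_sub_mul_lt_one hβ hst hv hu)))).continuousWithinAt

lemma integral_log_one_sub_exp_neg_mul_sub_mul (hβ : 0 < β) (hst : s ≤ t) (hv : ‖v‖ < 1) :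
    ∫ u in s..t, log (1 - Real.exp (-β * (t - u)) * v) =
      -((dilog v - dilog (v * Real.exp (-β * (t - s)))) / β) := by
  set F : ℕ → ℝ → ℂ := fun n u => ((Real.exp (-β * (t - u)) : ℂ) * v) ^ (n + 1) / (n + 1)
  have hseries : HasSum (fun n => ∫ u in s..t, F n u)
      (∫ u in s..t, -log (1 - Real.exp (-β * (t - u)) * v)) := by
    refine intervalIntegral.hasSum_integral_of_dominated_convergence (fun n _ => ‖v‖ ^ (n + 1))
      (fun n => (by fun_prop : Continuous (F n)).aestronglyMeasurable) (fun n => ?_)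
      (.of_forall fun _ _ =>
        (summable_nat_add_iff 1).mpr (summable_geometric_of_lt_one (norm_nonneg v) hv))
      intervalIntegrable_const (.of_forall fun u hu => ?_)
    · filter_upwards with u hu
      rw [Set.uIoc_of_le hst] at hu
      have hn : (1 : ℝ) ≤ ‖(n : ℂ) + 1‖ := by
        rw [← Nat.cast_add_one, norm_natCast]
        exact_mod_cast Nat.le_add_left 1 n
      rw [norm_div, norm_pow]
      exact (div_le_self (by positivity) hn).trans (pow_le_pow_left₀ (norm_nonneg _)
        (norm_ofReal_mul_le (abs_exp_neg_mul_sub_le_one hβ.le hu.2) v) _)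
    · exact hasSum_taylorSeries_neg_log'
        (norm_exp_neg_mul_sub_mul_lt_one hβ hst hv (Set.uIoc_subset_uIcc hu))
  have hterms : HasSum (fun n => ∫ u in s..t, F n u)
      ((dilog v - dilog (v * Real.exp (-β * (t - s)))) / β) := by
    have hvr : ‖v * Real.exp (-β * (t - s))‖ ≤ 1 := by
      rw [mul_comm]
      exact (norm_exp_neg_mul_sub_mul_lt_one hβ hst hv Set.left_mem_uIcc).le
    refine (((hasSum_dilog hv.le).sub (hasSum_dilog hvr)).div_const (β : ℂ)).congr_fun fun n => ?_
    have hβ' : (β : ℂ) ≠ 0 := ofReal_ne_zero.mpr hβ.ne'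
    have hn : (n : ℂ) + 1 ≠ 0 := Nat.cast_add_one_ne_zero n
    simp only [F, intervalIntegral.integral_div, integral_exp_neg_mul_sub_mul_pow hβ.ne']
    field_simp
  rw [← neg_eq_iff_eq_neg, ← intervalIntegral.integral_neg, hseries.unique hterms]

end

theorem gammaExponent_integral_dilog_general (κ α β : ℝ) (hκ : 0 < κ)
    (hβ : 0 < β) (s t : ℝ) (hst : s ≤ t) (x : ℝ) :
    (∫ u in s..t, gammaExponent κ α ((1 - Real.exp (-β * (t - u))) * x / β))
      = (t - s) * gammaExponent κ α (x / β)
        + α / β *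
          (dilog (-(x * Complex.I) / (κ * β - x * Complex.I))
            - dilog (-(x * Complex.I) / (κ * β - x * Complex.I)
                * Real.exp (-β * (t - s)))) := by
  set v : ℂ := -(x * I) / (κ * β - x * I)
  have hv : ‖v‖ < 1 := by
    simpa only [ofReal_mul] using norm_neg_mul_I_div_sub_lt_one (mul_pos hκ hβ).ne' x
  have hψ : Set.EqOn (fun u => gammaExponent κ α ((1 - Real.exp (-β * (t - u))) * x / β))
      (fun u => gammaExponent κ α (x / β) - α * log (1 - Real.exp (-β * (t - u)) * v))
      (Set.uIcc s t) := fun u hu =>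
    gammaExponent_one_sub_mul hκ.ne' hβ.ne' α x
      (abs_exp_neg_mul_sub_le_one hβ.le (Set.uIcc_of_le hst ▸ hu).2)
  rw [intervalIntegral.integral_congr hψ, intervalIntegral.integral_sub intervalIntegrable_const
      ((intervalIntegrable_log_one_sub_exp_neg_mul_sub_mul hβ hst hv).const_mul _),
    intervalIntegral.integral_const, intervalIntegral.integral_const_mul,
    integral_log_one_sub_exp_neg_mul_sub_mul hβ hst hv, real_smul, ofReal_sub]
  ring

/-- for `κ, α, β > 0`, `s ≤ t` and real `x`,
`∫_s^t ψ_γ((1 - e^{-β(t-u)})x/β) du = (t-s)ψ_γ(x/β) + (α/β)(Li₂(v) - Li₂(v e^{-β(t-s)}))`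
where `v = -ix/(κβ - ix)`. -/
theorem gammaExponent_integral_dilog (κ α β : ℝ) (hκ : 0 < κ) (hα : 0 < α)
    (hβ : 0 < β) (s t : ℝ) (hst : s ≤ t) (x : ℝ) :
    (∫ u in s..t, gammaExponent κ α ((1 - Real.exp (-β * (t - u))) * x / β))
      = (t - s) * gammaExponent κ α (x / β)
        + α / β *
          (dilog (-(x * Complex.I) / (κ * β - x * Complex.I))
            - dilog (-(x * Complex.I) / (κ * β - x * Complex.I)
                * Real.exp (-β * (t - s)))) :=
  gammaExponent_integral_dilog_general κ α β hκ hβ s t hst x
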